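/- Let A be a smooth ℂ-algebra, B = A⊗A⊗A, τ the automorphism of B swapping the last two tensor factors, J₃ = I₁₂ ∩ I₁₃ ∩ I₂₃, and σ : A⊗A → A⊗A the swap of the two factors. Define φ : B^τ → (A⊗A) ⊕ (A⊗A) by φ(b) = (μ₁₂(b), σ(μ₂₃(b))), let M₀ := {(s,t) ∈ (A⊗A) ⊕ (A⊗A) : μ(s) = μ(t)}, and let ψ : (A⊗A) ⊕ (A⊗A) → K/K² be the ℂ-linear map ψ(a⊗u, b⊗v) = class of 2(a⊗u) − 2(au⊗1) − (v⊗b) + (vb⊗1) (under K/K² ≅ Ω¹_{A/ℂ}, ψ(a⊗u, b⊗v) = 2a du − v db). Then φ(B^τ) ⊆ M₀ and the sequence 0 → J₃ ∩ B^τ → B^τ →^φ M₀ →^{ψ} K/K² → 0 is exact: ker φ = J₃ ∩ B^τ, the image of φ equals the kernel of ψ restricted to M₀, and ψ restricted to M₀ is surjective. -/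

import Mathlib

/-!
The kernel of `φ` on `B^τ` is `J₃ ∩ B^τ` because `μ₁₃ = μ₁₂ ∘ τ`. The composite `ψ ∘ φ` is
anti-invariant under `τ`: on pure tensors `ψφ(p⊗q⊗r) + ψφ(p⊗r⊗q)` is the class of
`−2 (p⊗1)(1⊗q − q⊗1)(1⊗r − r⊗1) ∈ K²`, so `ψ ∘ φ` vanishes on `B^τ`. Conversely, for
`(s, t) ∈ ker ψ|M₀` the invariant element `s⊗1 + τ(s⊗1) − μ(s)⊗1⊗1` has `μ₁₂ = s`, and its
`μ₂₃` differs from `σ t` by an element of `K²`. Every `xy` with `x, y ∈ K` is `μ₂₃` of the invariant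
element `½(c + τc)`, `c = (x⊗1)·τ(y⊗1)`, which is killed by `μ₁₂`; this corrects the second
component. Finally `ψ(x/2, 0) = [x]` for `x ∈ K`.
-/

open scoped TensorProduct

noncomputable section

namespace DiagIdeals

variable (A : Type) [CommRing A] [Algebra ℂ A]

/-- `B = A ⊗ A ⊗ A` (the triple tensor product over ℂ, parenthesized to the left). -/
abbrev B3 := (A ⊗[ℂ] A) ⊗[ℂ] A

/-- The multiplication map `μ : A ⊗ A → A`. -/
abbrev mu : A ⊗[ℂ] A →ₐ[ℂ] A := Algebra.TensorProduct.lmul' ℂ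

/-- `μ₁₂ : A⊗A⊗A → A⊗A`, multiplying the first and second tensor factors. -/
def mu12 : B3 A →ₐ[ℂ] A ⊗[ℂ] A :=
  Algebra.TensorProduct.map (mu A) (AlgHom.id ℂ A)

/-- `μ₂₃ : A⊗A⊗A → A⊗A`, multiplying the second and third tensor factors. -/
def mu23 : B3 A →ₐ[ℂ] A ⊗[ℂ] A :=
  (Algebra.TensorProduct.map (AlgHom.id ℂ A) (mu A)).comp
    (Algebra.TensorProduct.assoc ℂ ℂ ℂ A A A).toAlgHom

/-- The automorphism of `A⊗A⊗A` exchanging the first two tensor factors. -/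
def s12 : B3 A ≃ₐ[ℂ] B3 A :=
  Algebra.TensorProduct.congr (Algebra.TensorProduct.comm ℂ A A) AlgEquiv.refl

/-- The automorphism of `A⊗A⊗A` exchanging the last two tensor factors. -/
def s23 : B3 A ≃ₐ[ℂ] B3 A :=
  (Algebra.TensorProduct.assoc ℂ ℂ ℂ A A A).trans
    ((Algebra.TensorProduct.congr AlgEquiv.refl (Algebra.TensorProduct.comm ℂ A A)).trans
      (Algebra.TensorProduct.assoc ℂ ℂ ℂ A A A).symm)

/-- `μ₁₃ : A⊗A⊗A → A⊗A`, multiplying the first and third tensor factors. -/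
def mu13 : B3 A →ₐ[ℂ] A ⊗[ℂ] A := (mu12 A).comp (s23 A).toAlgHom

/-- The ideal `I₁₂ = ker μ₁₂` of the (1,2)-th pairwise diagonal. -/
def I12 : Ideal (B3 A) := RingHom.ker (mu12 A)

/-- The ideal `I₁₃ = ker μ₁₃` of the (1,3)-th pairwise diagonal. -/
def I13 : Ideal (B3 A) := RingHom.ker (mu13 A)

/-- The ideal `I₂₃ = ker μ₂₃` of the (2,3)-th pairwise diagonal. -/
def I23 : Ideal (B3 A) := RingHom.ker (mu23 A)

/-- The ideal `J₃` of the big diagonal in `A⊗A⊗A`. -/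
def J3 : Ideal (B3 A) := I12 A ⊓ I13 A ⊓ I23 A

/-- The set of `S₃`-invariant elements of `B = A⊗A⊗A`, for the action of `S₃`
permuting the tensor factors (invariance under the generating transpositions). -/
def inv3 : Set (B3 A) := {b | s12 A b = b ∧ s23 A b = b}

/-- The linear map `(A⊗A) ⊕ (A⊗A) → A⊗A` sending `(a⊗u, b⊗v)` to
`2(a⊗u) − 2(au⊗1) − (v⊗b) + (vb⊗1)`. -/
def Gmap : (A ⊗[ℂ] A) × (A ⊗[ℂ] A) →ₗ[ℂ] A ⊗[ℂ] A :=
  (((2 : ℂ) • LinearMap.id - (2 : ℂ) • ((TensorProduct.mk ℂ A A).flip 1 ∘ₗ LinearMap.mul' ℂ A)) ∘ₗ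
      LinearMap.fst ℂ (A ⊗[ℂ] A) (A ⊗[ℂ] A))
    - (((TensorProduct.comm ℂ A A).toLinearMap
          - ((TensorProduct.mk ℂ A A).flip 1 ∘ₗ LinearMap.mul' ℂ A)) ∘ₗ
        LinearMap.snd ℂ (A ⊗[ℂ] A) (A ⊗[ℂ] A))

lemma lmul'_flip_mul' (x : A ⊗[ℂ] A) :
    Algebra.TensorProduct.lmul' (S := A) ℂ
        ((TensorProduct.mk ℂ A A).flip 1 (LinearMap.mul' ℂ A x)) =
      Algebra.TensorProduct.lmul' (S := A) ℂ x := by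
  induction x using TensorProduct.induction_on with
  | zero => simp
  | tmul a b => simp [Algebra.TensorProduct.lmul'_apply_tmul]
  | add x y hx hy => simp only [map_add, hx, hy]

lemma lmul'_comm (x : A ⊗[ℂ] A) :
    Algebra.TensorProduct.lmul' (S := A) ℂ (TensorProduct.comm ℂ A A x) =
      Algebra.TensorProduct.lmul' (S := A) ℂ x := by
  induction x using TensorProduct.induction_on with
  | zero => simp
  | tmul a b => simp [Algebra.TensorProduct.lmul'_apply_tmul, mul_comm]
  | add x y hx hy => simp only [map_add, hx, hy]

lemma Gmap_mem (p : (A ⊗[ℂ] A) × (A ⊗[ℂ] A)) :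
    Gmap A p ∈ (KaehlerDifferential.ideal ℂ A).restrictScalars ℂ := by
  obtain ⟨s, t⟩ := p
  simp only [Submodule.restrictScalars_mem, KaehlerDifferential.ideal, RingHom.mem_ker]
  simp only [Gmap, LinearMap.sub_apply, LinearMap.coe_comp, Function.comp_apply,
    LinearMap.fst_apply, LinearMap.snd_apply, LinearMap.smul_apply, LinearMap.id_apply,
    LinearEquiv.coe_coe, map_sub, map_smul]
  rw [lmul'_flip_mul', lmul'_flip_mul', lmul'_comm]
  simp

/-- The ℂ-linear map `ψ : (A⊗A) ⊕ (A⊗A) → K/K² = Ω[A⁄ℂ]` sending `(a⊗u, b⊗v)` to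
the class of `2(a⊗u) − 2(au⊗1) − (v⊗b) + (vb⊗1)` (i.e. `2a du − v db`). -/
def psi : (A ⊗[ℂ] A) × (A ⊗[ℂ] A) →ₗ[ℂ] Ω[A⁄ℂ] :=
  (((KaehlerDifferential.ideal ℂ A).toCotangent).restrictScalars ℂ).comp
    ((Gmap A).codRestrict ((KaehlerDifferential.ideal ℂ A).restrictScalars ℂ) (Gmap_mem A))

/-- `M₀ = {(s,t) : μ(s) = μ(t)}`. -/
def M0 : Submodule ℂ ((A ⊗[ℂ] A) × (A ⊗[ℂ] A)) :=
  LinearMap.ker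
    ((LinearMap.mul' ℂ A ∘ₗ LinearMap.fst ℂ (A ⊗[ℂ] A) (A ⊗[ℂ] A))
      - (LinearMap.mul' ℂ A ∘ₗ LinearMap.snd ℂ (A ⊗[ℂ] A) (A ⊗[ℂ] A)))

/-- `φ : B^τ → (A⊗A) ⊕ (A⊗A)`, `φ(b) = (μ₁₂(b), σ(μ₂₃(b)))` where `σ` swaps the
two factors of `A⊗A`. -/
def phi (b : B3 A) : (A ⊗[ℂ] A) × (A ⊗[ℂ] A) :=
  (mu12 A b, Algebra.TensorProduct.comm ℂ A A (mu23 A b))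

@[simp]
lemma mu12_tmul (p q r : A) : mu12 A (p ⊗ₜ q ⊗ₜ r) = (p * q) ⊗ₜ r := by
  simp [mu12]

@[simp]
lemma mu23_tmul (p q r : A) : mu23 A (p ⊗ₜ q ⊗ₜ r) = p ⊗ₜ (q * r) := by
  simp [mu23]

@[simp]
lemma s23_tmul (p q r : A) : s23 A (p ⊗ₜ q ⊗ₜ r) = p ⊗ₜ r ⊗ₜ q := by
  simp [s23]

lemma s23_involutive : Function.Involutive (s23 A) :=
  LinearMap.congr_fun (TensorProduct.ext_threefold
    (g := (s23 A).toLinearMap ∘ₗ (s23 A).toLinearMap) (h := LinearMap.id) fun p q r => by simp)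

lemma mu23_s23 (b : B3 A) : mu23 A (s23 A b) = mu23 A b :=
  LinearMap.congr_fun (TensorProduct.ext_threefold
    (g := (mu23 A).toLinearMap ∘ₗ (s23 A).toLinearMap) (h := (mu23 A).toLinearMap)
    fun p q r => by simp [mul_comm]) b

lemma mu_mu12 (b : B3 A) : mu A (mu12 A b) = mu A (mu23 A b) :=
  LinearMap.congr_fun (TensorProduct.ext_threefold
    (g := (mu A).toLinearMap ∘ₗ (mu12 A).toLinearMap)
    (h := (mu A).toLinearMap ∘ₗ (mu23 A).toLinearMap)
    fun p q r => by simp [mul_assoc]) b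

@[simp]
lemma mu12_tmul_one (x : A ⊗[ℂ] A) : mu12 A (x ⊗ₜ 1) = mu A x ⊗ₜ 1 := by
  simp [mu12]

@[simp]
lemma mu23_tmul_one (x : A ⊗[ℂ] A) : mu23 A (x ⊗ₜ 1) = x :=
  LinearMap.congr_fun (TensorProduct.ext'
    (g := (mu23 A).toLinearMap ∘ₗ (TensorProduct.mk ℂ _ A).flip 1) (h := LinearMap.id)
    fun p q => by simp) x

@[simp]
lemma mu12_s23_tmul_one (x : A ⊗[ℂ] A) : mu12 A (s23 A (x ⊗ₜ 1)) = x :=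
  LinearMap.congr_fun (TensorProduct.ext'
    (g := (mu12 A).toLinearMap ∘ₗ (s23 A).toLinearMap ∘ₗ (TensorProduct.mk ℂ _ A).flip 1)
    (h := LinearMap.id) fun p q => by simp) x

lemma mem_M0_iff (p : (A ⊗[ℂ] A) × (A ⊗[ℂ] A)) : p ∈ M0 A ↔ mu A p.1 = mu A p.2 :=
  LinearMap.mem_ker.trans sub_eq_zero

lemma Gmap_apply (s t : A ⊗[ℂ] A) :
    Gmap A (s, t) = (2 : ℂ) • (s - mu A s ⊗ₜ 1) - (TensorProduct.comm ℂ A A t - mu A t ⊗ₜ 1) := by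
  simp only [Gmap, LinearMap.sub_apply, LinearMap.coe_comp, LinearMap.coe_fst, Function.comp_apply,
    LinearMap.smul_apply, LinearMap.id_coe, id_eq, LinearMap.flip_apply, TensorProduct.mk_apply,
    LinearMap.coe_snd, LinearEquiv.coe_coe, smul_sub]
  rfl

lemma phi_mem_M0 (b : B3 A) : phi A b ∈ M0 A := by
  rw [mem_M0_iff]
  exact (mu_mu12 A b).trans (lmul'_comm A _).symm

lemma mem_J3_iff (b : B3 A) :
    b ∈ J3 A ↔ mu12 A b = 0 ∧ mu12 A (s23 A b) = 0 ∧ mu23 A b = 0 := by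
  simp [J3, I12, I13, I23, mu13, and_assoc]

lemma phi_eq_zero_iff {b : B3 A} (hb : s23 A b = b) : phi A b = 0 ↔ b ∈ J3 A := by
  simp [phi, mem_J3_iff, hb]

lemma psi_eq_zero_iff (p : (A ⊗[ℂ] A) × (A ⊗[ℂ] A)) :
    psi A p = 0 ↔ Gmap A p ∈ KaehlerDifferential.ideal ℂ A ^ 2 :=
  Ideal.toCotangent_eq_zero _ _

lemma Gmap_phi_add_phi_s23 (p q r : A) :
    Gmap A (phi A (p ⊗ₜ q ⊗ₜ r) + phi A (p ⊗ₜ r ⊗ₜ q)) =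
      -(2 : ℂ) • ((p ⊗ₜ 1) * ((1 ⊗ₜ q - q ⊗ₜ 1) * (1 ⊗ₜ r - r ⊗ₜ 1))) := by
  simp only [phi, mu12_tmul, mu23_tmul, Algebra.TensorProduct.comm_tmul, Prod.mk_add_mk, Gmap_apply,
    map_add, Algebra.TensorProduct.lmul'_apply_tmul, TensorProduct.add_tmul, two_smul,
    TensorProduct.comm_tmul, mul_sub, sub_mul, Algebra.TensorProduct.tmul_mul_tmul, mul_one,
    one_mul, neg_smul, neg_add_rev, neg_sub]
  ring_nf

lemma psi_phi_s23_add_psi_phi (b : B3 A) : psi A (phi A (s23 A b)) + psi A (phi A b) = 0 := by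
  let phiₗ : B3 A →ₗ[ℂ] (A ⊗[ℂ] A) × (A ⊗[ℂ] A) := (mu12 A).toLinearMap.prod
    ((Algebra.TensorProduct.comm ℂ A A).toLinearMap ∘ₗ (mu23 A).toLinearMap)
  refine LinearMap.congr_fun (TensorProduct.ext_threefold
    (g := psi A ∘ₗ phiₗ ∘ₗ (s23 A).toLinearMap + psi A ∘ₗ phiₗ) (h := 0) fun p q r => ?_) b
  change psi A (phi A (p ⊗ₜ r ⊗ₜ q)) + psi A (phi A (p ⊗ₜ q ⊗ₜ r)) = 0
  rw [← map_add, add_comm, psi_eq_zero_iff, Gmap_phi_add_phi_s23, pow_two]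
  have hq := KaehlerDifferential.one_smul_sub_smul_one_mem_ideal ℂ q
  have hr := KaehlerDifferential.one_smul_sub_smul_one_mem_ideal ℂ r
  exact Submodule.smul_of_tower_mem _ _ (Ideal.mul_mem_left _ _ (Ideal.mul_mem_mul hq hr))

lemma psi_phi_eq_zero {b : B3 A} (hb : s23 A b = b) : psi A (phi A b) = 0 := by
  have h := psi_phi_s23_add_psi_phi A b
  rw [hb, ← two_smul ℂ] at h
  exact (smul_eq_zero.mp h).resolve_left two_ne_zero

lemma exists_s23_fixed_mu12_eq (s : A ⊗[ℂ] A) :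
    ∃ b, s23 A b = b ∧ mu12 A b = s ∧ mu23 A b = (2 : ℂ) • (s - mu A s ⊗ₜ 1) + mu A s ⊗ₜ 1 := by
  refine ⟨s ⊗ₜ 1 + s23 A (s ⊗ₜ 1) - mu A s ⊗ₜ 1 ⊗ₜ 1, ?_, ?_, ?_⟩
  · simp [s23_involutive A _, add_comm]
  · simp
  · rw [map_sub, map_add, mu23_s23, mu23_tmul_one, mu23_tmul, mul_one, two_smul]
    abel

lemma exists_s23_fixed_of_mu12_eq_zero {c : B3 A} (h₁ : mu12 A c = 0) (h₂ : mu12 A (s23 A c) = 0) :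
    ∃ b, s23 A b = b ∧ mu12 A b = 0 ∧ mu23 A b = mu23 A c := by
  refine ⟨(2⁻¹ : ℂ) • (c + s23 A c), ?_, ?_, ?_⟩
  · simp [s23_involutive A c, add_comm]
  · simp [h₁, h₂]
  · rw [map_smul, map_add, mu23_s23, ← two_smul ℂ, smul_smul, inv_mul_cancel₀ two_ne_zero, one_smul]

lemma exists_s23_fixed_of_mem_sq {k : A ⊗[ℂ] A} (hk : k ∈ KaehlerDifferential.ideal ℂ A ^ 2) :
    ∃ b, s23 A b = b ∧ mu12 A b = 0 ∧ mu23 A b = k := by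
  rw [pow_two] at hk
  refine Submodule.mul_induction_on hk (fun x hx y hy => ?_) ?_
  · have hx : mu A x = 0 := hx
    have hy : mu A y = 0 := hy
    refine exists_s23_fixed_of_mu12_eq_zero A (c := x ⊗ₜ 1 * s23 A (y ⊗ₜ 1)) ?_ ?_ |>.imp
      fun b hb => ⟨hb.1, hb.2.1, by rw [hb.2.2, map_mul, mu23_s23]; simp⟩
    · simp [hx]
    · simp [s23_involutive A _, hy]
  · rintro k₁ k₂ ⟨b₁, hb₁, h₁₂, h₂₃⟩ ⟨b₂, hb₂, g₁₂, g₂₃⟩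
    exact ⟨b₁ + b₂, by rw [map_add, hb₁, hb₂], by rw [map_add, h₁₂, g₁₂, add_zero],
      by rw [map_add, h₂₃, g₂₃]⟩

lemma exists_s23_fixed_phi_eq {p : (A ⊗[ℂ] A) × (A ⊗[ℂ] A)} (hp : p ∈ M0 A) (hψ : psi A p = 0) :
    ∃ b, s23 A b = b ∧ phi A b = p := by
  obtain ⟨s, t⟩ := p
  obtain ⟨b₁, hb₁, h₁₂, h₂₃⟩ := exists_s23_fixed_mu12_eq A s
  have hk : TensorProduct.comm ℂ A A t - mu23 A b₁ = -Gmap A (s, t) := by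
    rw [h₂₃, Gmap_apply, (mem_M0_iff A _).mp hp]
    abel
  obtain ⟨b₂, hb₂, g₁₂, g₂₃⟩ := exists_s23_fixed_of_mem_sq A (k := _ - _)
    (hk ▸ neg_mem ((psi_eq_zero_iff A _).mp hψ))
  refine ⟨b₁ + b₂, by rw [map_add, hb₁, hb₂], ?_⟩
  simp only [phi, map_add, h₁₂, g₁₂, g₂₃, add_zero, add_sub_cancel]
  exact congrArg _ (TensorProduct.comm_comm ℂ A A t)

lemma psi_half_smul_zero (x : KaehlerDifferential.ideal ℂ A) :
    psi A ((2⁻¹ : ℂ) • (x : A ⊗[ℂ] A), 0) = (KaehlerDifferential.ideal ℂ A).toCotangent x := by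
  have hx : mu A x = 0 := x.2
  change Ideal.toCotangent _ ⟨Gmap A _, _⟩ = _
  congr 1
  ext
  simp [Gmap_apply, hx, smul_smul]

lemma exists_mem_M0_psi_eq (ω : Ω[A⁄ℂ]) : ∃ p ∈ M0 A, psi A p = ω := by
  obtain ⟨x, rfl⟩ := Ideal.toCotangent_surjective _ ω
  have hx : mu A x = 0 := x.2
  exact ⟨_, by simp [mem_M0_iff, hx], psi_half_smul_zero A x⟩

theorem stmt13_general (A : Type) [CommRing A] [Algebra ℂ A] :
    (∀ b : B3 A, s23 A b = b → phi A b ∈ M0 A) ∧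
    (∀ b : B3 A, s23 A b = b → (phi A b = 0 ↔ b ∈ J3 A)) ∧
    {p : (A ⊗[ℂ] A) × (A ⊗[ℂ] A) | ∃ b : B3 A, s23 A b = b ∧ phi A b = p} =
      {p : (A ⊗[ℂ] A) × (A ⊗[ℂ] A) | p ∈ M0 A ∧ psi A p = 0} ∧
    (∀ ω : Ω[A⁄ℂ], ∃ p ∈ M0 A, psi A p = ω) := by
  refine ⟨fun b _ => phi_mem_M0 A b, fun b => phi_eq_zero_iff A, ?_, exists_mem_M0_psi_eq A⟩
  ext p
  constructor
  · rintro ⟨b, hb, rfl⟩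
    exact ⟨phi_mem_M0 A b, psi_phi_eq_zero A hb⟩
  · rintro ⟨hp, hψ⟩
    exact exists_s23_fixed_phi_eq A hp hψ

/-- Let `A` be a smooth ℂ-algebra, `B = A⊗A⊗A`, `τ` the automorphism
swapping the last two tensor factors, and `J₃ = I₁₂ ∩ I₁₃ ∩ I₂₃`. With
`φ(b) = (μ₁₂(b), σ(μ₂₃(b)))`, `M₀ = {(s,t) : μ(s) = μ(t)}` and
`ψ(a⊗u, b⊗v) = [2(a⊗u) − 2(au⊗1) − (v⊗b) + (vb⊗1)] = 2a du − v db ∈ K/K²`,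
we have `φ(B^τ) ⊆ M₀` and the sequence
`0 → J₃ ∩ B^τ → B^τ →^φ M₀ →^ψ K/K² → 0` is exact: `ker φ = J₃ ∩ B^τ`,
`im φ = ker (ψ|M₀)`, and `ψ|M₀` is surjective. -/
theorem stmt13 (A : Type) [CommRing A] [Algebra ℂ A]
    [Algebra.FormallySmooth ℂ A] [Algebra.FinitePresentation ℂ A] :
    (∀ b : B3 A, s23 A b = b → phi A b ∈ M0 A) ∧
    (∀ b : B3 A, s23 A b = b → (phi A b = 0 ↔ b ∈ J3 A)) ∧
    {p : (A ⊗[ℂ] A) × (A ⊗[ℂ] A) | ∃ b : B3 A, s23 A b = b ∧ phi A b = p} =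
      {p : (A ⊗[ℂ] A) × (A ⊗[ℂ] A) | p ∈ M0 A ∧ psi A p = 0} ∧
    (∀ ω : Ω[A⁄ℂ], ∃ p ∈ M0 A, psi A p = ω) :=
  stmt13_general A

end DiagIdeals

end
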